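/- Let Λ be a linear trace-preserving positive map on 4×4 matrices preserving separability, λ ∈ (2/3,1), and suppose λΛ(Φ₁)+(1−λ)Λ(|01⟩⟨01|) = λΦ₁+(1−λ)Φ₃. Then with τ = (1/2)Φ₁ + (1/4)|01⟩⟨01| + (1/4)|10⟩⟨10| one has tr(Φ₁Λ(τ)) ≥ (3λ−1)/(4λ) + 1/8 > 1/2. -/

import Mathlib

open Matrix Complex BigOperators
open scoped ComplexOrder

noncomputable section

/-- Standard basis ket of ℂ⁴ -/
def ket (k : Fin 4) : Fin 4 → ℂ := fun j => if j = k then 1 else 0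

/-- Tensor product of two qubit vectors, with |ij⟩ ↦ index 2i+j -/
def tens (ψ χ : Fin 2 → ℂ) : Fin 4 → ℂ :=
  ![ψ 0 * χ 0, ψ 0 * χ 1, ψ 1 * χ 0, ψ 1 * χ 1]

/-- Outer product |v⟩⟨v| -/
def proj (v : Fin 4 → ℂ) : Matrix (Fin 4) (Fin 4) ℂ :=
  Matrix.of fun i j => v i * star (v j)

/-- A qubit vector is a unit vector -/
def unit2 (ψ : Fin 2 → ℂ) : Prop := ∑ j, Complex.normSq (ψ j) = 1

/-- The four Bell vectors -/
def Bell : Fin 4 → (Fin 4 → ℂ) :=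
  ![![1 / (Real.sqrt 2 : ℂ), 0, 0, 1 / (Real.sqrt 2 : ℂ)],
    ![1 / (Real.sqrt 2 : ℂ), 0, 0, -(1 / (Real.sqrt 2 : ℂ))],
    ![0, 1 / (Real.sqrt 2 : ℂ), 1 / (Real.sqrt 2 : ℂ), 0],
    ![0, -(1 / (Real.sqrt 2 : ℂ)), 1 / (Real.sqrt 2 : ℂ), 0]]

/-- Bell projectors Φᵢ (indexed from 0: `Phi 0` is Φ₁, etc.) -/
def Phi (i : Fin 4) : Matrix (Fin 4) (Fin 4) ℂ := proj (Bell i)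

/-- Separability of a two-qubit (4×4) matrix -/
def IsSepState (ρ : Matrix (Fin 4) (Fin 4) ℂ) : Prop :=
  ∃ (n : ℕ) (p : Fin n → ℝ) (ψ χ : Fin n → Fin 2 → ℂ),
    (∀ i, 0 ≤ p i) ∧ (∑ i, p i = 1) ∧ (∀ i, unit2 (ψ i)) ∧ (∀ i, unit2 (χ i)) ∧
    ρ = ∑ i, (p i : ℂ) • proj (tens (ψ i) (χ i))

/-- Density matrix -/
def IsState (ρ : Matrix (Fin 4) (Fin 4) ℂ) : Prop := ρ.PosSemidef ∧ ρ.trace = 1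

/-!
Write `a, u` for the weights `tr(Φ₁ ·)`, `tr(Φ₃ ·)` of `Λ(Φ₁)` and `b, w` for those of
`Λ(|01⟩⟨01|)`. Pairing the hypothesis with `Φ₁` and `Φ₃` gives `λa + (1-λ)b = λ` and
`λu + (1-λ)w = 1-λ`. A product state has weight at most `1/2` on every Bell state
(Cauchy–Schwarz), so the separable state `Λ(|01⟩⟨01|)` has `b, w ≤ 1/2`; and `a + u ≤ 1`
because `Λ(Φ₁)` is a state and the Bell projectors sum to `1`. Together these force `b = 1/2`
and `a = (3λ-1)/(2λ)`, and since the weight of `Λ(|10⟩⟨10|)` is nonnegative, linearity gives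
`tr(Φ₁ Λ(τ)) = a/2 + b/4 + c/4 ≥ (3λ-1)/(4λ) + 1/8`.
-/

lemma proj_eq_vecMulVec (v : Fin 4 → ℂ) : proj v = vecMulVec v (star v) := rfl

lemma trace_proj_mul (v : Fin 4 → ℂ) (A : Matrix (Fin 4) (Fin 4) ℂ) :
    (proj v * A).trace = star v ⬝ᵥ (A *ᵥ v) := by
  rw [trace_mul_comm, proj_eq_vecMulVec, mul_vecMulVec, trace_vecMulVec, dotProduct_comm]

lemma trace_proj_mul_proj (v w : Fin 4 → ℂ) :
    (proj v * proj w).trace = Complex.normSq (star v ⬝ᵥ w) := by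
  rw [trace_proj_mul, proj_eq_vecMulVec, vecMulVec_mulVec, Complex.normSq_eq_conj_mul_self]
  simp only [dotProduct_smul, MulOpposite.smul_eq_mul_unop, MulOpposite.unop_op]
  rw [star_dotProduct w v, mul_comm]; rfl

lemma inv_sqrt_two_mul_self : ((√2 : ℝ) : ℂ)⁻¹ * ((√2 : ℝ) : ℂ)⁻¹ = 1 / 2 := by
  rw [← mul_inv, ← Complex.ofReal_mul, Real.mul_self_sqrt zero_le_two]; norm_num

lemma star_Bell_dotProduct_Bell (i j : Fin 4) :
    star (Bell i) ⬝ᵥ Bell j = if i = j then 1 else 0 := by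
  fin_cases i <;> fin_cases j <;>
    simp [Bell, dotProduct, Fin.sum_univ_four, inv_sqrt_two_mul_self] <;> norm_num

lemma trace_Phi (i : Fin 4) : (Phi i).trace = 1 := by
  rw [Phi, proj_eq_vecMulVec, trace_vecMulVec, dotProduct_comm, star_Bell_dotProduct_Bell,
    if_pos rfl]

-- The Bell vectors are the columns of a unitary `U`, and `∑ i, Φᵢ = U * Uᴴ`.
lemma sum_Phi : ∑ i, Phi i = 1 := by
  let U : Matrix (Fin 4) (Fin 4) ℂ := of fun a i => Bell i a
  have hU : Uᴴ * U = 1 := by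
    ext i j
    simpa [U, mul_apply, dotProduct, one_apply] using star_Bell_dotProduct_Bell i j
  rw [← mul_eq_one_comm.mp hU]
  ext a b
  simp [U, mul_apply, Phi, proj, Matrix.sum_apply]

def bellFidelity (i : Fin 4) : Matrix (Fin 4) (Fin 4) ℂ →ₗ[ℝ] ℝ :=
  Complex.reLm ∘ₗ (traceLinearMap (Fin 4) ℂ ℂ).restrictScalars ℝ ∘ₗ LinearMap.mulLeft ℝ (Phi i)

lemma bellFidelity_apply (i : Fin 4) (ρ : Matrix (Fin 4) (Fin 4) ℂ) :
    bellFidelity i ρ = ((Phi i * ρ).trace).re := rfl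

lemma bellFidelity_ofReal_smul (i : Fin 4) (r : ℝ) (ρ : Matrix (Fin 4) (Fin 4) ℂ) :
    bellFidelity i ((r : ℂ) • ρ) = r * bellFidelity i ρ := by
  rw [Complex.coe_smul, map_smul, smul_eq_mul]

lemma bellFidelity_proj (i : Fin 4) (v : Fin 4 → ℂ) :
    bellFidelity i (proj v) = Complex.normSq (star (Bell i) ⬝ᵥ v) := by
  rw [bellFidelity_apply, Phi, trace_proj_mul_proj, Complex.ofReal_re]

lemma bellFidelity_Phi (i j : Fin 4) : bellFidelity i (Phi j) = if i = j then 1 else 0 := by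
  rw [Phi, bellFidelity_proj, star_Bell_dotProduct_Bell]
  split_ifs <;> simp

lemma bellFidelity_nonneg (i : Fin 4) {ρ : Matrix (Fin 4) (Fin 4) ℂ} (hρ : ρ.PosSemidef) :
    0 ≤ bellFidelity i ρ := by
  rw [bellFidelity_apply, Phi, trace_proj_mul]
  exact (Complex.nonneg_iff.mp (hρ.dotProduct_mulVec_nonneg (Bell i))).1

lemma sum_bellFidelity (ρ : Matrix (Fin 4) (Fin 4) ℂ) :
    ∑ i, bellFidelity i ρ = ρ.trace.re := by
  simp only [bellFidelity_apply, ← Complex.re_sum, ← trace_sum, ← Finset.sum_mul, sum_Phi,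
    one_mul]

lemma bellFidelity_add_bellFidelity_le {ρ : Matrix (Fin 4) (Fin 4) ℂ} (hρ : ρ.PosSemidef)
    {i j : Fin 4} (hij : i ≠ j) : bellFidelity i ρ + bellFidelity j ρ ≤ ρ.trace.re := by
  rw [← sum_bellFidelity, ← Finset.sum_pair (f := fun k => bellFidelity k ρ) hij]
  exact Finset.sum_le_sum_of_subset_of_nonneg (Finset.subset_univ _)
    fun k _ _ => bellFidelity_nonneg k hρ

lemma normSq_mul_add_mul_le (a b c d : ℂ) :
    Complex.normSq (a * b + c * d)
      ≤ (Complex.normSq a + Complex.normSq c) * (Complex.normSq b + Complex.normSq d) := by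
  have lagrange : (Complex.normSq a + Complex.normSq c) * (Complex.normSq b + Complex.normSq d)
      = Complex.normSq (a * b + c * d) + Complex.normSq (a * star d - star b * c) := by
    simp only [Complex.normSq_apply, Complex.add_re, Complex.add_im, Complex.mul_re,
      Complex.mul_im, Complex.sub_re, Complex.sub_im, Complex.star_def, Complex.conj_re,
      Complex.conj_im]
    ring
  linarith [Complex.normSq_nonneg (a * star d - star b * c)]

lemma normSq_div_sqrt_two_le_half {a b c d : ℂ}
    (hac : Complex.normSq a + Complex.normSq c = 1)
    (hbd : Complex.normSq b + Complex.normSq d = 1) :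
    Complex.normSq ((a * b + c * d) / (√2 : ℝ)) ≤ 1 / 2 := by
  rw [Complex.normSq_div, Complex.normSq_ofReal, Real.mul_self_sqrt zero_le_two]
  have := normSq_mul_add_mul_le a b c d
  rw [hac, hbd, one_mul] at this
  linarith

lemma bellFidelity_proj_tens_le (i : Fin 4) {ψ χ : Fin 2 → ℂ} (hψ : unit2 ψ)
    (hχ : unit2 χ) :
    bellFidelity i (proj (tens ψ χ)) ≤ 1 / 2 := by
  simp only [unit2, Fin.sum_univ_two] at hψ hχ
  rw [bellFidelity_proj]
  -- `⟨Φᵢ|ψ ⊗ χ⟩ = (ab + cd)/√2` with `(a, c)`, `(b, d)` signed permutations of `ψ`, `χ`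
  fin_cases i <;>
    [convert normSq_div_sqrt_two_le_half hψ hχ using 2;
     convert normSq_div_sqrt_two_le_half (a := ψ 0) (c := -ψ 1)
       (by rwa [Complex.normSq_neg]) hχ using 2;
     convert normSq_div_sqrt_two_le_half (b := χ 1) (d := χ 0) hψ (by rwa [add_comm]) using 2;
     convert normSq_div_sqrt_two_le_half (a := ψ 1) (c := -ψ 0)
       (by rwa [Complex.normSq_neg, add_comm]) hχ using 2] <;>
    simp only [dotProduct, Fin.sum_univ_four, Bell, tens, Fin.isValue, Fin.reduceFinMk,
      Fin.mk_one, Fin.zero_eta, cons_val, cons_val_zero, cons_val_one, Pi.star_apply,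
      RCLike.star_def, one_div, map_inv₀, conj_ofReal, map_zero, map_neg, zero_mul, neg_mul,
      add_zero, zero_add] <;>
    ring

lemma IsSepState.bellFidelity_le {σ : Matrix (Fin 4) (Fin 4) ℂ} (hσ : IsSepState σ)
    (i : Fin 4) :
    bellFidelity i σ ≤ 1 / 2 := by
  obtain ⟨n, p, ψ, χ, hp, hp1, hψ, hχ, rfl⟩ := hσ
  calc bellFidelity i (∑ k, (p k : ℂ) • proj (tens (ψ k) (χ k)))
      = ∑ k, p k * bellFidelity i (proj (tens (ψ k) (χ k))) := by
        simp only [map_sum, bellFidelity_ofReal_smul]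
    _ ≤ ∑ k, p k * (1 / 2) := by
        gcongr with k
        · exact hp k
        · exact bellFidelity_proj_tens_le i (hψ k) (hχ k)
    _ = 1 / 2 := by rw [← Finset.sum_mul, hp1, one_mul]

lemma isSepState_proj_tens {ψ χ : Fin 2 → ℂ} (hψ : unit2 ψ) (hχ : unit2 χ) :
    IsSepState (proj (tens ψ χ)) :=
  ⟨1, fun _ => 1, fun _ => ψ, fun _ => χ, fun _ => zero_le_one, by simp, fun _ => hψ,
    fun _ => hχ, by simp⟩

lemma ket_one_eq_tens : ket 1 = tens ![1, 0] ![0, 1] := by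
  funext j
  fin_cases j <;> simp [ket, tens]

lemma isSepState_proj_ket_one : IsSepState (proj (ket 1)) := by
  rw [ket_one_eq_tens]
  exact isSepState_proj_tens (by simp [unit2]) (by simp [unit2])

lemma mixture_weights_forced {l a b u w : ℝ} (hl : 0 < l) (hl1 : l < 1)
    (e0 : l * a + (1 - l) * b = l) (e2 : l * u + (1 - l) * w = 1 - l)
    (hau : a + u ≤ 1) (hb : b ≤ 1 / 2) (hw : w ≤ 1 / 2) :
    a = (3 * l - 1) / (2 * l) ∧ b = 1 / 2 := by
  have hb' : b = 1 / 2 := by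
    nlinarith [mul_le_mul_of_nonneg_left hau hl.le,
      mul_le_mul_of_nonneg_left hw (sub_pos.2 hl1).le]
  refine ⟨?_, hb'⟩
  rw [hb'] at e0
  rw [eq_div_iff (by positivity)]
  linarith

theorem tau_image_entangled_bound
    (Λ : Matrix (Fin 4) (Fin 4) ℂ →ₗ[ℂ] Matrix (Fin 4) (Fin 4) ℂ)
    (htr : ∀ ρ, (Λ ρ).trace = ρ.trace)
    (hpos : ∀ ρ, ρ.PosSemidef → (Λ ρ).PosSemidef)
    (hne : ∀ ρ, IsSepState ρ → IsSepState (Λ ρ))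
    (l : ℝ) (hl : 2 / 3 < l) (hl1 : l < 1)
    (heq : (l : ℂ) • Λ (Phi 0) + ((1 - l : ℝ) : ℂ) • Λ (proj (ket 1))
      = (l : ℂ) • Phi 0 + ((1 - l : ℝ) : ℂ) • Phi 2) :
    (3 * l - 1) / (4 * l) + 1 / 8
        ≤ ((Phi 0 * Λ ((1 / 2 : ℂ) • Phi 0 + (1 / 4 : ℂ) • proj (ket 1)
            + (1 / 4 : ℂ) • proj (ket 2))).trace).re
      ∧ (1 / 2 : ℝ) < (3 * l - 1) / (4 * l) + 1 / 8 := by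
  have hl0 : 0 < l := by linarith
  have hΦ₁ := congrArg (bellFidelity 0) heq
  have hΦ₃ := congrArg (bellFidelity 2) heq
  simp only [map_add, bellFidelity_ofReal_smul, bellFidelity_Phi, Fin.reduceEq, reduceIte,
    mul_one, mul_zero, add_zero, zero_add] at hΦ₁ hΦ₃
  have hau := bellFidelity_add_bellFidelity_le (hpos (Phi 0) (posSemidef_vecMulVec_self_star _))
    (show (0 : Fin 4) ≠ 2 by decide)
  rw [htr, trace_Phi, Complex.one_re] at hau
  have hsep := hne _ isSepState_proj_ket_one
  obtain ⟨ha, hb⟩ :=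
    mixture_weights_forced hl0 hl1 hΦ₁ hΦ₃ hau (hsep.bellFidelity_le 0) (hsep.bellFidelity_le 2)
  have hc := bellFidelity_nonneg 0 (hpos (proj (ket 2)) (posSemidef_vecMulVec_self_star _))
  have hτ : (1 / 2 : ℂ) • Phi 0 + (1 / 4 : ℂ) • proj (ket 1) + (1 / 4 : ℂ) • proj (ket 2)
      = ((1 / 2 : ℝ) : ℂ) • Phi 0 + ((1 / 4 : ℝ) : ℂ) • proj (ket 1)
        + ((1 / 4 : ℝ) : ℂ) • proj (ket 2) := by
    norm_num
  rw [← bellFidelity_apply, hτ]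
  simp only [map_add, map_smul, bellFidelity_ofReal_smul, ha, hb]
  have h_half : 1 / 2 * ((3 * l - 1) / (2 * l)) = (3 * l - 1) / (4 * l) := by
    field_simp; ring
  have h_three_eighths : 3 / 8 < (3 * l - 1) / (4 * l) := by
    rw [lt_div_iff₀ (by positivity)]; linarith
  constructor <;> linarith
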